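/- arXiv:1411.8003 — 2 statements merged into one kernel-verified Lean document; each statement's English description precedes it below -/
import Mathlib

section
/- Let Σ ∈ ℝ^{r×r} be a diagonal matrix with positive diagonal entries and let Σmin > 0 be its smallest diagonal entry. Let X, Y ∈ ℝ^{r×r}, set D := X·Yᵀ − Σ and d := ‖D‖_F, and assume d < Σmin. Then Σ + D = X·Yᵀ is invertible and, defining Ŷ := Σ·((Σ + D)⁻¹)ᵀ·Y, the following hold: (i) X·Ŷᵀ = Σ; (ii) ‖Y‖_F ≥ (1 − d/Σmin)·‖Ŷ‖_F; (iii) ‖Y − Ŷ‖_F ≤ (d/(Σmin − d))·‖Y‖_F; moreover ‖Y − Ŷ‖_F ≤ (d/Σmin)·‖Ŷ‖_F. -/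
open Matrix
open scoped Classical

noncomputable section

/-- Frobenius norm of a real matrix. -/
def frob {m n : ℕ} (A : Matrix (Fin m) (Fin n) ℝ) : ℝ :=
  Real.sqrt (∑ i, ∑ j, A i j ^ 2)

/-- Euclidean norm of the `i`-th row of a matrix. -/
def rowNorm {m n : ℕ} (A : Matrix (Fin m) (Fin n) ℝ) (i : Fin m) : ℝ :=
  Real.sqrt (∑ j, A i j ^ 2)

/-- Frobenius inner product `⟨A,B⟩ = trace(AᵀB)`. -/
def finner {m n : ℕ} (A B : Matrix (Fin m) (Fin n) ℝ) : ℝ :=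
  ∑ i, ∑ j, A i j * B i j

/-- Projection onto the set of entries indexed by `Ω` (other entries are set to `0`). -/
def projOmega {m n : ℕ} (Ω : Finset (Fin m × Fin n)) (A : Matrix (Fin m) (Fin n) ℝ) :
    Matrix (Fin m) (Fin n) ℝ :=
  Matrix.of fun i j => if (i, j) ∈ Ω then A i j else 0

/-- `G₀(z) = (max{0, z-1})²`. -/
def G0 (z : ℝ) : ℝ := max 0 (z - 1) ^ 2

/-- `G₀′(z) = 2·max{0, z-1}`. -/
def G0' (z : ℝ) : ℝ := 2 * max 0 (z - 1)

/-- The matrix whose `i`-th row is the `i`-th row of `A` and whose other rows vanish. -/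
def rowMat {m n : ℕ} (A : Matrix (Fin m) (Fin n) ℝ) (i : Fin m) :
    Matrix (Fin m) (Fin n) ℝ :=
  Matrix.of fun i' j => if i' = i then A i j else 0

/-- The regularizer `G(X,Y)`. -/
def Greg {m n r : ℕ} (ρ β1 β2 βT : ℝ) (X : Matrix (Fin m) (Fin r) ℝ)
    (Y : Matrix (Fin n) (Fin r) ℝ) : ℝ :=
  ρ * ∑ i, G0 (3 * rowNorm X i ^ 2 / (2 * β1 ^ 2)) +
    ρ * ∑ j, G0 (3 * rowNorm Y j ^ 2 / (2 * β2 ^ 2)) +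
    ρ * G0 (3 * frob X ^ 2 / (2 * βT ^ 2)) +
    ρ * G0 (3 * frob Y ^ 2 / (2 * βT ^ 2))

/-- The regularized objective `F̃(X,Y)`. -/
def Ftilde {m n r : ℕ} (Ω : Finset (Fin m × Fin n)) (M : Matrix (Fin m) (Fin n) ℝ)
    (ρ β1 β2 βT : ℝ) (X : Matrix (Fin m) (Fin r) ℝ) (Y : Matrix (Fin n) (Fin r) ℝ) : ℝ :=
  (1 / 2) * frob (projOmega Ω (M - X * Yᵀ)) ^ 2 + Greg ρ β1 β2 βT X Y

/-- Gradient of the regularizer with respect to one of the factors. -/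
def gradG1 {m r : ℕ} (ρ β βT : ℝ) (X : Matrix (Fin m) (Fin r) ℝ) :
    Matrix (Fin m) (Fin r) ℝ :=
  (∑ i, (ρ * G0' (3 * rowNorm X i ^ 2 / (2 * β ^ 2)) * (3 / β ^ 2)) • rowMat X i) +
    (ρ * G0' (3 * frob X ^ 2 / (2 * βT ^ 2)) * (3 / βT ^ 2)) • X

/-- `∇_X F̃(X,Y)`. -/
def gradX {m n r : ℕ} (Ω : Finset (Fin m × Fin n)) (M : Matrix (Fin m) (Fin n) ℝ)
    (ρ β1 βT : ℝ) (X : Matrix (Fin m) (Fin r) ℝ) (Y : Matrix (Fin n) (Fin r) ℝ) :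
    Matrix (Fin m) (Fin r) ℝ :=
  projOmega Ω (X * Yᵀ - M) * Y + gradG1 ρ β1 βT X

/-- `∇_Y F̃(X,Y)`. -/
def gradY {m n r : ℕ} (Ω : Finset (Fin m × Fin n)) (M : Matrix (Fin m) (Fin n) ℝ)
    (ρ β2 βT : ℝ) (X : Matrix (Fin m) (Fin r) ℝ) (Y : Matrix (Fin n) (Fin r) ℝ) :
    Matrix (Fin n) (Fin r) ℝ :=
  (projOmega Ω (X * Yᵀ - M))ᵀ * X + gradG1 ρ β2 βT Y

/-- Membership in `K₁`. -/
def K1mem {m n r : ℕ} (β1 β2 : ℝ) (X : Matrix (Fin m) (Fin r) ℝ)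
    (Y : Matrix (Fin n) (Fin r) ℝ) : Prop :=
  (∀ i, rowNorm X i ≤ β1) ∧ ∀ j, rowNorm Y j ≤ β2

/-- Membership in `K₂`. -/
def K2mem {m n r : ℕ} (βT : ℝ) (X : Matrix (Fin m) (Fin r) ℝ)
    (Y : Matrix (Fin n) (Fin r) ℝ) : Prop :=
  frob X ≤ βT ∧ frob Y ≤ βT

/-- Membership in `K(t) = {(X,Y) : ‖M - XYᵀ‖_F ≤ t}`. -/
def Kmem {m n r : ℕ} (M : Matrix (Fin m) (Fin n) ℝ) (t : ℝ)
    (X : Matrix (Fin m) (Fin r) ℝ) (Y : Matrix (Fin n) (Fin r) ℝ) : Prop :=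
  frob (M - X * Yᵀ) ≤ t

attribute [local instance] Matrix.frobeniusNormedAddCommGroup Matrix.frobeniusNormedSpace
  Matrix.frobeniusNormedRing

lemma frob_eq_norm {m n : ℕ} (A : Matrix (Fin m) (Fin n) ℝ) : frob A = ‖A‖ := by
  rw [Matrix.frobenius_norm_def, frob, Real.sqrt_eq_rpow]
  congr 1
  refine Finset.sum_congr rfl fun i _ => Finset.sum_congr rfl fun j _ => ?_
  rw [Real.rpow_two, Real.norm_eq_abs, sq_abs]

lemma frob_nonneg {m n : ℕ} (A : Matrix (Fin m) (Fin n) ℝ) : 0 ≤ frob A :=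
  Real.sqrt_nonneg _

lemma frob_le_frob {m n : ℕ} (A B : Matrix (Fin m) (Fin n) ℝ)
    (h : ∀ i j, A i j ^ 2 ≤ B i j ^ 2) : frob A ≤ frob B :=
  Real.sqrt_le_sqrt (Finset.sum_le_sum fun i _ => Finset.sum_le_sum fun j _ => h i j)

lemma frob_smul {m n : ℕ} (c : ℝ) (A : Matrix (Fin m) (Fin n) ℝ) :
    frob (c • A) = |c| * frob A := by
  rw [frob_eq_norm, frob_eq_norm, norm_smul, Real.norm_eq_abs]

lemma frob_mul_le {r : ℕ} (A B : Matrix (Fin r) (Fin r) ℝ) :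
    frob (A * B) ≤ frob A * frob B := by
  simp only [frob_eq_norm]; exact Matrix.frobenius_norm_mul A B

lemma frob_transpose {m n : ℕ} (A : Matrix (Fin m) (Fin n) ℝ) : frob Aᵀ = frob A := by
  simp only [frob_eq_norm]; exact Matrix.frobenius_norm_transpose A

/-- **Claim: the orthogonalization step `Ŷ = Σ(Σ+D)⁻ᵀY`.** -/
theorem stmt16 (r : ℕ) (hr : 1 ≤ r) (σ : Fin r → ℝ) (hσ : ∀ k, 0 < σ k)
    (Smin : ℝ) (hminle : ∀ k, Smin ≤ σ k) (hminmem : ∃ k, σ k = Smin)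
    (X Y : Matrix (Fin r) (Fin r) ℝ)
    (hd : frob (X * Yᵀ - Matrix.diagonal σ) < Smin) :
    IsUnit (Matrix.diagonal σ + (X * Yᵀ - Matrix.diagonal σ)) ∧
      X * (Matrix.diagonal σ *
          ((Matrix.diagonal σ + (X * Yᵀ - Matrix.diagonal σ))⁻¹)ᵀ * Y)ᵀ =
        Matrix.diagonal σ ∧
      (1 - frob (X * Yᵀ - Matrix.diagonal σ) / Smin) *
          frob (Matrix.diagonal σ *
            ((Matrix.diagonal σ + (X * Yᵀ - Matrix.diagonal σ))⁻¹)ᵀ * Y) ≤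
        frob Y ∧
      frob (Y - Matrix.diagonal σ *
            ((Matrix.diagonal σ + (X * Yᵀ - Matrix.diagonal σ))⁻¹)ᵀ * Y) ≤
        frob (X * Yᵀ - Matrix.diagonal σ) /
            (Smin - frob (X * Yᵀ - Matrix.diagonal σ)) * frob Y ∧
      frob (Y - Matrix.diagonal σ *
            ((Matrix.diagonal σ + (X * Yᵀ - Matrix.diagonal σ))⁻¹)ᵀ * Y) ≤
        frob (X * Yᵀ - Matrix.diagonal σ) / Smin *
          frob (Matrix.diagonal σ *
            ((Matrix.diagonal σ + (X * Yᵀ - Matrix.diagonal σ))⁻¹)ᵀ * Y) := by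
  haveI : CompleteSpace (Matrix (Fin r) (Fin r) ℝ) := FiniteDimensional.complete ℝ _
  have hSmin : 0 < Smin := by obtain ⟨k, hk⟩ := hminmem; exact hk ▸ hσ k
  set Sg : Matrix (Fin r) (Fin r) ℝ := Matrix.diagonal σ with hSg
  set D : Matrix (Fin r) (Fin r) ℝ := X * Yᵀ - Sg with hDdef
  set d : ℝ := frob D with hddef
  have hd0 : 0 ≤ d := frob_nonneg _
  have hA : Sg + D = X * Yᵀ := by rw [hDdef]; abel
  -- invertibility
  set N : Matrix (Fin r) (Fin r) ℝ := Matrix.diagonal (fun k => (σ k)⁻¹) * D with hN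
  have hNlt : frob N < 1 := by
    have h1 : frob N ≤ frob (Smin⁻¹ • D) := by
      refine frob_le_frob _ _ fun i j => ?_
      rw [hN, Matrix.diagonal_mul, Matrix.smul_apply, smul_eq_mul, mul_pow, mul_pow]
      have hσi : 0 < σ i := hσ i
      have hle : (Smin)⁻¹ ≥ (σ i)⁻¹ := inv_anti₀ hSmin (hminle i)
      have h2 : ((σ i)⁻¹) ^ 2 ≤ (Smin⁻¹) ^ 2 := by
        have h3 : 0 ≤ (σ i)⁻¹ := by positivity
        nlinarith
      nlinarith [sq_nonneg (D i j)]
    rw [frob_smul, abs_of_pos (by positivity : (0:ℝ) < Smin⁻¹)] at h1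
    calc frob N ≤ Smin⁻¹ * d := h1
      _ < 1 := by rw [inv_mul_lt_iff₀ hSmin, mul_one]; exact hd
  have hunit1 : IsUnit (1 + N) := by
    have hn : ‖-N‖ < 1 := by rw [norm_neg, ← frob_eq_norm]; exact hNlt
    have := (Units.oneSub (-N) hn).isUnit
    simpa [sub_neg_eq_add] using this
  have hSgu : IsUnit Sg := by
    rw [hSg, Matrix.isUnit_diagonal]
    exact ⟨⟨σ, fun k => (σ k)⁻¹,
      funext fun k => mul_inv_cancel₀ (hσ k).ne',
      funext fun k => inv_mul_cancel₀ (hσ k).ne'⟩, rfl⟩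
  have hfac : Sg * (1 + N) = Sg + D := by
    rw [mul_add, mul_one, hN, ← mul_assoc, hSg, Matrix.diagonal_mul_diagonal]
    have hfun : (fun i => σ i * (σ i)⁻¹) = fun _ : Fin r => (1 : ℝ) :=
      funext fun k => mul_inv_cancel₀ (hσ k).ne'
    rw [hfun, Matrix.diagonal_one, one_mul]
  have hAu : IsUnit (Sg + D) := by rw [← hfac]; exact hSgu.mul hunit1
  refine ⟨hAu, ?_⟩
  have hdet : IsUnit (Sg + D).det := (Matrix.isUnit_iff_isUnit_det _).mp hAu
  have hinv1 : (Sg + D) * (Sg + D)⁻¹ = 1 := Matrix.mul_nonsing_inv _ hdet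
  have hinv2 : (Sg + D)⁻¹ * (Sg + D) = 1 := Matrix.nonsing_inv_mul _ hdet
  set B : Matrix (Fin r) (Fin r) ℝ := ((Sg + D)⁻¹)ᵀ * Y with hB
  have hYhB : Sg * ((Sg + D)⁻¹)ᵀ * Y = Sg * B := by rw [hB, mul_assoc]
  -- (i)
  have hSgT : Sgᵀ = Sg := by rw [hSg]; exact Matrix.diagonal_transpose σ
  have hi : X * (Sg * ((Sg + D)⁻¹)ᵀ * Y)ᵀ = Sg := by
    have h3 : (Sg * ((Sg + D)⁻¹)ᵀ * Y)ᵀ = Yᵀ * ((Sg + D)⁻¹ * Sg) := by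
      rw [Matrix.transpose_mul, Matrix.transpose_mul, Matrix.transpose_transpose, hSgT]
    rw [h3, ← mul_assoc, ← hA, ← mul_assoc, hinv1, one_mul]
  refine ⟨hi, ?_⟩
  -- key identity : Y - Sg * B = Dᵀ * B
  have hid : Y - Sg * ((Sg + D)⁻¹)ᵀ * Y = Dᵀ * B := by
    rw [hYhB]
    have h1 : Dᵀ * B + Sg * B = Y := by
      rw [← add_mul]
      have h2 : Dᵀ + Sg = (Sg + D)ᵀ := by
        rw [Matrix.transpose_add, hSgT, add_comm]
      rw [h2, hB, ← mul_assoc, ← Matrix.transpose_mul, hinv2, Matrix.transpose_one, one_mul]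
    exact (eq_sub_of_add_eq h1).symm
  -- norm bounds
  have htle : frob (Y - Sg * ((Sg + D)⁻¹)ᵀ * Y) ≤ d * frob B := by
    rw [hid]
    calc frob (Dᵀ * B) ≤ frob Dᵀ * frob B := frob_mul_le _ _
      _ = d * frob B := by rw [frob_transpose]
  have hSgB : Smin * frob B ≤ frob (Sg * ((Sg + D)⁻¹)ᵀ * Y) := by
    rw [hYhB]
    have h1 : frob (Smin • B) ≤ frob (Sg * B) := by
      refine frob_le_frob _ _ fun i j => ?_
      rw [Matrix.smul_apply, smul_eq_mul, hSg, Matrix.diagonal_mul, mul_pow, mul_pow]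
      have h4 : Smin ^ 2 ≤ σ i ^ 2 := by nlinarith [hminle i, hσ i]
      exact mul_le_mul_of_nonneg_right h4 (sq_nonneg _)
    rwa [frob_smul, abs_of_pos hSmin] at h1
  have hBnn : 0 ≤ frob B := frob_nonneg _
  have hkey : Smin * frob (Y - Sg * ((Sg + D)⁻¹)ᵀ * Y) ≤
      d * frob (Sg * ((Sg + D)⁻¹)ᵀ * Y) := by
    calc Smin * frob (Y - Sg * ((Sg + D)⁻¹)ᵀ * Y) ≤ Smin * (d * frob B) :=
          mul_le_mul_of_nonneg_left htle (le_of_lt hSmin)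
      _ = d * (Smin * frob B) := by ring
      _ ≤ d * frob (Sg * ((Sg + D)⁻¹)ᵀ * Y) := mul_le_mul_of_nonneg_left hSgB hd0
  have htri : frob (Sg * ((Sg + D)⁻¹)ᵀ * Y) ≤
      frob Y + frob (Y - Sg * ((Sg + D)⁻¹)ᵀ * Y) := by
    have e : Y - (Y - Sg * ((Sg + D)⁻¹)ᵀ * Y) = Sg * ((Sg + D)⁻¹)ᵀ * Y :=
      sub_sub_cancel _ _
    calc frob (Sg * ((Sg + D)⁻¹)ᵀ * Y)
        = frob (Y - (Y - Sg * ((Sg + D)⁻¹)ᵀ * Y)) := by rw [e]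
      _ ≤ frob Y + frob (Y - Sg * ((Sg + D)⁻¹)ᵀ * Y) := by
          rw [frob_eq_norm, frob_eq_norm, frob_eq_norm]; exact norm_sub_le _ _
  have htnn : 0 ≤ frob (Y - Sg * ((Sg + D)⁻¹)ᵀ * Y) := frob_nonneg _
  have hYnn : 0 ≤ frob Y := frob_nonneg _
  have hYhnn : 0 ≤ frob (Sg * ((Sg + D)⁻¹)ᵀ * Y) := frob_nonneg _
  refine ⟨?_, ?_, ?_⟩
  · have h2 : (1 - d / Smin) = (Smin - d) / Smin := by field_simp
    rw [h2, div_mul_eq_mul_div, div_le_iff₀ hSmin]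
    nlinarith [hkey, mul_le_mul_of_nonneg_left htri hSmin.le]
  · rw [div_mul_eq_mul_div, le_div_iff₀ (by linarith : (0:ℝ) < Smin - d)]
    nlinarith [hkey, mul_le_mul_of_nonneg_left htri hd0]
  · rw [div_mul_eq_mul_div, le_div_iff₀ hSmin]
    nlinarith [hkey]

end
end

section
/- Let H be a real inner product space, let P : H → H and Q : H → H be orthogonal projections (linear, idempotent, self-adjoint maps), let p > 0, and let a ∈ H satisfy Q(a) = a. If ‖Q(P(a)) − p·a‖ ≤ (p/6)·‖a‖, then (5/6)·p·‖a‖² ≤ ‖P(a)‖² ≤ (7/6)·p·‖a‖². -/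
open scoped RealInnerProductSpace

/-- If `P, Q` are orthogonal projections on a real inner product space,
`p > 0`, `Q a = a` and `‖Q(P a) - p • a‖ ≤ (p/6)‖a‖`, then
`(5/6)p‖a‖² ≤ ‖P a‖² ≤ (7/6)p‖a‖²`. -/
theorem stmt19 {H : Type*} [NormedAddCommGroup H] [InnerProductSpace ℝ H]
    (P Q : H →ₗ[ℝ] H)
    (hPidem : ∀ x, P (P x) = P x)
    (hPsa : ∀ u v, ⟪P u, v⟫ = ⟪u, P v⟫)
    (hQidem : ∀ x, Q (Q x) = Q x)
    (hQsa : ∀ u v, ⟪Q u, v⟫ = ⟪u, Q v⟫)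
    (p : ℝ) (hp : 0 < p) (a : H) (ha : Q a = a)
    (h : ‖Q (P a) - p • a‖ ≤ p / 6 * ‖a‖) :
    5 / 6 * p * ‖a‖ ^ 2 ≤ ‖P a‖ ^ 2 ∧ ‖P a‖ ^ 2 ≤ 7 / 6 * p * ‖a‖ ^ 2 := by
  have h1 : ‖P a‖ ^ 2 = ⟪P a, a⟫ := by
    rw [← real_inner_self_eq_norm_sq, hPsa, hPidem, real_inner_comm]
  have h2 : ⟪Q (P a) - p • a, a⟫ = ⟪P a, a⟫ - p * ‖a‖ ^ 2 := by
    rw [inner_sub_left, real_inner_smul_left, real_inner_self_eq_norm_sq, hQsa, ha]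
  have h3 : |⟪Q (P a) - p • a, a⟫| ≤ p / 6 * ‖a‖ * ‖a‖ := by
    calc |⟪Q (P a) - p • a, a⟫| ≤ ‖Q (P a) - p • a‖ * ‖a‖ := abs_real_inner_le_norm _ _
    _ ≤ p / 6 * ‖a‖ * ‖a‖ := by nlinarith [norm_nonneg a]
  rw [abs_le] at h3
  constructor <;> nlinarith [norm_nonneg a]
end
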